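/- Suppose asset j is dominant and let K ∈ 𝒦 with K_j ∈ (0,1]. Then for every n ≥ 1 the quantity appearing in the sharpened upper bound is nonnegative: log(1/K_j) − 1 + K_j·E[ R_{n,j} / (Kᵀ R_n) ] ≥ 0. -/

import Mathlib

open MeasureTheory ProbabilityTheory Filter Topology Finset Real

/-- Compound (total) return of asset `i` over the first `n` periods:
`R_{n,i}(ω) = ∏_{k=0}^{n-1} (1 + X_i(k)(ω))`. -/
noncomputable def compoundReturn {Ω : Type*} {m : ℕ} (X : ℕ → Ω → Fin m → ℝ)
    (n : ℕ) (ω : Ω) (i : Fin m) : ℝ :=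
  ∏ k ∈ Finset.range n, (1 + X k ω i)

/-- Expected logarithmic growth with rebalancing period `n`:
`g_n(K) = (1/n) E[log (Kᵀ R_n)]`. -/
noncomputable def elg {Ω : Type*} [MeasureSpace Ω] {m : ℕ} (X : ℕ → Ω → Fin m → ℝ)
    (n : ℕ) (K : Fin m → ℝ) : ℝ :=
  (n : ℝ)⁻¹ * ∫ ω, Real.log (∑ i, K i * compoundReturn X n ω i)

/-- The admissible set: the unit simplex in `ℝ^m`. -/
def simplex (m : ℕ) : Set (Fin m → ℝ) := {K | (∀ i, 0 ≤ K i) ∧ ∑ i, K i = 1}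

/-!
Write `S = Kᵀ R_n`. The ratio `S / R_{n,j} = ∑ᵢ Kᵢ R_{n,i} / R_{n,j}` is a weighted sum of products
of `n` independent copies of `(1 + Xᵢ) / (1 + X_j)`, so its expectation is `∑ᵢ Kᵢ cᵢⁿ ≤ 1`, where
`cᵢ = E[(1 + Xᵢ) / (1 + X_j)] ≤ 1` by dominance. The tangent-line bound `1 / y ≥ 2 - y` then gives
`E[R_{n,j} / S] ≥ 1`, and `log (1 / K_j) ≥ 1 - K_j` finishes the proof.
-/

lemma two_sub_le_inv {x : ℝ} (hx : 0 < x) : 2 - x ≤ x⁻¹ := by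
  have hsq : x⁻¹ - (2 - x) = (x - 1) ^ 2 / x := by field_simp; ring
  linarith [div_nonneg (sq_nonneg (x - 1)) hx.le]

lemma log_one_div_sub_one_add_mul_nonneg {a E : ℝ} (ha : 0 < a) (hE : 1 ≤ E) :
    0 ≤ log (1 / a) - 1 + a * E := by
  have hlog : 1 - a ≤ log (1 / a) := by
    simpa only [one_div, inv_inv] using one_sub_inv_le_log_of_pos (one_div_pos.2 ha)
  linarith [le_mul_of_one_le_right ha.le hE]

section

variable {Ω : Type*} [MeasurableSpace Ω] {μ : Measure Ω}

lemma integral_sum_mul_le_one {ι : Type*} [Fintype ι] {g : ι → Ω → ℝ}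
    (hg : ∀ i, Integrable (g i) μ) (hle : ∀ i, ∫ ω, g i ω ∂μ ≤ 1) {K : ι → ℝ}
    (hK0 : ∀ i, 0 ≤ K i) (hK1 : ∑ i, K i = 1) : ∫ ω, ∑ i, K i * g i ω ∂μ ≤ 1 := by
  rw [integral_finsetSum _ fun i _ ↦ (hg i).const_mul (K i), ← hK1]
  simp_rw [integral_const_mul]
  exact sum_le_sum fun i _ ↦ mul_le_of_le_one_right (hK0 i) (hle i)

lemma one_le_integral_inv_of_integral_le_one [IsProbabilityMeasure μ] {Y : Ω → ℝ}
    (hpos : ∀ᵐ ω ∂μ, 0 < Y ω) (hY : Integrable Y μ) (hYinv : Integrable (fun ω ↦ (Y ω)⁻¹) μ)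
    (hle : ∫ ω, Y ω ∂μ ≤ 1) : 1 ≤ ∫ ω, (Y ω)⁻¹ ∂μ := by
  have hmono : ∫ ω, (2 - Y ω) ∂μ ≤ ∫ ω, (Y ω)⁻¹ ∂μ :=
    integral_mono_ae ((integrable_const 2).sub hY) hYinv (hpos.mono fun _ ↦ two_sub_le_inv)
  rw [integral_sub (integrable_const 2) hY, integral_const, probReal_univ, one_smul] at hmono
  linarith

lemma ProbabilityTheory.iIndepFun.integral_prod_range_comp_of_identDistrib {β : Type*}
    [MeasurableSpace β] {X : ℕ → Ω → β} (hX : iIndepFun X μ) (hmeas : ∀ k, Measurable (X k))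
    (hident : ∀ k, IdentDistrib (X k) (X 0) μ μ) {g : β → ℝ} (hg : Measurable g) (n : ℕ) :
    ∫ ω, ∏ k ∈ range n, g (X k ω) ∂μ = (∫ ω, g (X 0 ω) ∂μ) ^ n := by
  have hfin (ω : Ω) : ∏ k ∈ range n, g (X k ω) = ∏ k : Fin n, g (X k ω) :=
    (Fin.prod_univ_eq_prod_range (fun k ↦ g (X k ω)) n).symm
  simp_rw [hfin]
  rw [(hX.precomp Fin.val_injective).integral_fun_prod_comp (f := fun _ ↦ g)
    (fun k ↦ (hmeas k).aemeasurable) (fun _ ↦ hg.aestronglyMeasurable)]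
  have hk (k : ℕ) : ∫ ω, g (X k ω) ∂μ = ∫ ω, g (X 0 ω) ∂μ := ((hident k).comp hg).integral_eq
  simp [hk]

end

lemma div_sum_mul_le_inv {ι : Type*} [Fintype ι] {K R : ι → ℝ} (hK : ∀ i, 0 ≤ K i)
    (hR : ∀ i, 0 ≤ R i) {j : ι} (hKj : 0 < K j) (hRj : 0 < R j) :
    R j / ∑ i, K i * R i ≤ (K j)⁻¹ := by
  have hjle : K j * R j ≤ ∑ i, K i * R i :=
    single_le_sum (fun i _ ↦ mul_nonneg (hK i) (hR i)) (mem_univ j)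
  rw [div_le_iff₀ ((mul_pos hKj hRj).trans_le hjle), inv_mul_eq_div, le_div_iff₀ hKj]
  linarith

section CompoundReturn

variable {Ω : Type*} {m : ℕ} {X : ℕ → Ω → Fin m → ℝ}

lemma compoundReturn_div (n : ℕ) (ω : Ω) (i j : Fin m) :
    compoundReturn X n ω i / compoundReturn X n ω j =
      ∏ k ∈ range n, (1 + X k ω i) / (1 + X k ω j) :=
  (prod_div_distrib ..).symm

lemma compoundReturn_mem_Icc {ω : Ω} {i : Fin m} {a b : ℝ} (ha : -1 < a)
    (h : ∀ k, a ≤ X k ω i ∧ X k ω i ≤ b) (n : ℕ) :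
    compoundReturn X n ω i ∈ Set.Icc ((1 + a) ^ n) ((1 + b) ^ n) := by
  constructor
  · calc (1 + a) ^ n = ∏ _k ∈ range n, (1 + a) := by simp
      _ ≤ compoundReturn X n ω i :=
        prod_le_prod (fun _ _ ↦ by linarith) fun k _ ↦ by linarith [(h k).1]
  · calc compoundReturn X n ω i ≤ ∏ _k ∈ range n, (1 + b) :=
        prod_le_prod (fun k _ ↦ by linarith [(h k).1]) fun k _ ↦ by linarith [(h k).2]
      _ = (1 + b) ^ n := by simp

variable [MeasurableSpace Ω] {μ : Measure Ω}

lemma measurable_compoundReturn (hmeas : ∀ k, Measurable (X k)) (n : ℕ) (i : Fin m) :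
    Measurable fun ω ↦ compoundReturn X n ω i :=
  Finset.measurable_prod _ fun k _ ↦ measurable_const.add ((measurable_pi_apply i).comp (hmeas k))

lemma ae_compoundReturn_mem_Icc {Xmin Xmax : Fin m → ℝ} (hXmin : ∀ i, -1 < Xmin i)
    (hbdd : ∀ᵐ ω ∂μ, ∀ k i, Xmin i ≤ X k ω i ∧ X k ω i ≤ Xmax i) (n : ℕ) :
    ∀ᵐ ω ∂μ, ∀ i, compoundReturn X n ω i ∈ Set.Icc ((1 + Xmin i) ^ n) ((1 + Xmax i) ^ n) :=
  hbdd.mono fun _ hω i ↦ compoundReturn_mem_Icc (hXmin i) (fun k ↦ hω k i) n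

lemma integral_compoundReturn_div (hmeas : ∀ k, Measurable (X k)) (hiid : iIndepFun X μ)
    (hident : ∀ k, IdentDistrib (X k) (X 0) μ μ) (n : ℕ) (i j : Fin m) :
    ∫ ω, compoundReturn X n ω i / compoundReturn X n ω j ∂μ =
      (∫ ω, (1 + X 0 ω i) / (1 + X 0 ω j) ∂μ) ^ n := by
  simp_rw [compoundReturn_div]
  exact hiid.integral_prod_range_comp_of_identDistrib hmeas hident
    (g := fun x ↦ (1 + x i) / (1 + x j)) (by fun_prop) n

lemma integral_compoundReturn_div_le_one [IsProbabilityMeasure μ] (hmeas : ∀ k, Measurable (X k))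
    (hiid : iIndepFun X μ) (hident : ∀ k, IdentDistrib (X k) (X 0) μ μ)
    (hpos : ∀ᵐ ω ∂μ, ∀ i, 0 < 1 + X 0 ω i) {j : Fin m}
    (hdom : ∀ i, i ≠ j → ∫ ω, (1 + X 0 ω i) / (1 + X 0 ω j) ∂μ ≤ 1) (n : ℕ) (i : Fin m) :
    ∫ ω, compoundReturn X n ω i / compoundReturn X n ω j ∂μ ≤ 1 := by
  rw [integral_compoundReturn_div hmeas hiid hident]
  refine pow_le_one₀ (integral_nonneg_of_ae (hpos.mono fun _ h ↦ (div_pos (h i) (h j)).le)) ?_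
  rcases eq_or_ne i j with rfl | hij
  · rw [integral_congr_ae (g := fun _ ↦ (1 : ℝ)) (hpos.mono fun _ h ↦ div_self (h i).ne')]
    simp
  · exact hdom i hij

lemma integrable_compoundReturn_div [IsFiniteMeasure μ] (hmeas : ∀ k, Measurable (X k))
    {n : ℕ} {a b : Fin m → ℝ} (ha : ∀ i, 0 < a i)
    (hR : ∀ᵐ ω ∂μ, ∀ i, compoundReturn X n ω i ∈ Set.Icc (a i) (b i)) (i j : Fin m) :
    Integrable (fun ω ↦ compoundReturn X n ω i / compoundReturn X n ω j) μ := by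
  refine Integrable.of_bound ((measurable_compoundReturn hmeas n i).div
    (measurable_compoundReturn hmeas n j)).aestronglyMeasurable (b i / a j) ?_
  filter_upwards [hR] with ω hω
  have hi := (ha i).trans_le (hω i).1
  rw [Real.norm_of_nonneg (div_nonneg hi.le ((ha j).trans_le (hω j).1).le)]
  exact div_le_div₀ (hi.le.trans (hω i).2) (hω i).2 (ha j) (hω j).1

lemma integrable_compoundReturn_div_portfolio [IsFiniteMeasure μ]
    (hmeas : ∀ k, Measurable (X k)) {n : ℕ} (hR : ∀ᵐ ω ∂μ, ∀ i, 0 < compoundReturn X n ω i)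
    {K : Fin m → ℝ} (hK : ∀ i, 0 ≤ K i) {j : Fin m} (hKj : 0 < K j) :
    Integrable (fun ω ↦ compoundReturn X n ω j / ∑ i, K i * compoundReturn X n ω i) μ := by
  refine Integrable.of_bound ((measurable_compoundReturn hmeas n j).div
    (Finset.measurable_sum _ fun i _ ↦ (measurable_compoundReturn hmeas n i).const_mul (K i))
    ).aestronglyMeasurable (K j)⁻¹ ?_
  filter_upwards [hR] with ω hω
  rw [Real.norm_of_nonneg (div_nonneg (hω j).le (sum_nonneg fun i _ ↦ mul_nonneg (hK i) (hω i).le))]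
  exact div_sum_mul_le_inv hK (fun i ↦ (hω i).le) hKj (hω j)

lemma one_le_integral_compoundReturn_div_portfolio [IsProbabilityMeasure μ]
    (hmeas : ∀ k, Measurable (X k)) (hiid : iIndepFun X μ)
    (hident : ∀ k, IdentDistrib (X k) (X 0) μ μ) {Xmin Xmax : Fin m → ℝ}
    (hXmin : ∀ i, -1 < Xmin i) (hbdd : ∀ᵐ ω ∂μ, ∀ k i, Xmin i ≤ X k ω i ∧ X k ω i ≤ Xmax i)
    {j : Fin m} (hdom : ∀ i, i ≠ j → ∫ ω, (1 + X 0 ω i) / (1 + X 0 ω j) ∂μ ≤ 1)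
    {K : Fin m → ℝ} (hK : K ∈ simplex m) (hKj : 0 < K j) (n : ℕ) :
    1 ≤ ∫ ω, compoundReturn X n ω j / ∑ i, K i * compoundReturn X n ω i ∂μ := by
  obtain ⟨hK0, hK1⟩ := hK
  have hXmin' i : 0 < 1 + Xmin i := by linarith [hXmin i]
  have hpos : ∀ᵐ ω ∂μ, ∀ i, 0 < 1 + X 0 ω i :=
    hbdd.mono fun _ h i ↦ (hXmin' i).trans_le (by linarith [(h 0 i).1])
  have hR := ae_compoundReturn_mem_Icc hXmin hbdd n
  have hRpos : ∀ᵐ ω ∂μ, ∀ i, 0 < compoundReturn X n ω i :=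
    hR.mono fun _ h i ↦ (pow_pos (hXmin' i) n).trans_le (h i).1
  have hint i := integrable_compoundReturn_div hmeas (fun i ↦ pow_pos (hXmin' i) n) hR i j
  have hsum_div ω : (∑ i, K i * compoundReturn X n ω i) / compoundReturn X n ω j =
      ∑ i, K i * (compoundReturn X n ω i / compoundReturn X n ω j) := by
    simp only [sum_div, mul_div_assoc]
  have hYpos : ∀ᵐ ω ∂μ, 0 < (∑ i, K i * compoundReturn X n ω i) / compoundReturn X n ω j :=
    hRpos.mono fun _ h ↦ div_pos (sum_pos' (fun i _ ↦ mul_nonneg (hK0 i) (h i).le)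
      ⟨j, mem_univ j, mul_pos hKj (h j)⟩) (h j)
  have hYint : Integrable
      (fun ω ↦ (∑ i, K i * compoundReturn X n ω i) / compoundReturn X n ω j) μ := by
    simp_rw [hsum_div]
    exact integrable_finsetSum _ fun i _ ↦ (hint i).const_mul (K i)
  have hYle : ∫ ω, (∑ i, K i * compoundReturn X n ω i) / compoundReturn X n ω j ∂μ ≤ 1 := by
    simp_rw [hsum_div]
    exact integral_sum_mul_le_one hint
      (integral_compoundReturn_div_le_one hmeas hiid hident hpos hdom n) hK0 hK1
  simpa only [inv_div] using one_le_integral_inv_of_integral_le_one hYpos hYint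
    (by simpa only [inv_div] using integrable_compoundReturn_div_portfolio hmeas hRpos hK0 hKj)
    hYle

end CompoundReturn

theorem sharp_upper_bound_nonneg_general
    {Ω : Type*} [MeasureSpace Ω] [IsProbabilityMeasure (ℙ : Measure Ω)]
    {m : ℕ}
    (X : ℕ → Ω → Fin m → ℝ)
    (hmeas : ∀ k, Measurable (X k))
    (hiid : iIndepFun X ℙ)
    (hident : ∀ k, IdentDistrib (X k) (X 0) ℙ ℙ)
    (Xmin Xmax : Fin m → ℝ)
    (hXmin : ∀ i, -1 < Xmin i)
    (hbdd : ∀ k, ∀ᵐ ω ∂(ℙ : Measure Ω), ∀ i, Xmin i ≤ X k ω i ∧ X k ω i ≤ Xmax i)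
    (j : Fin m)
    (hdom : ∀ i, i ≠ j → ∫ ω, (1 + X 0 ω i) / (1 + X 0 ω j) ≤ 1)
    (K : Fin m → ℝ) (hK : K ∈ simplex m) (hKj : K j ∈ Set.Ioc (0 : ℝ) 1) :
    ∀ n : ℕ, 1 ≤ n →
      0 ≤ Real.log (1 / K j) - 1 +
        K j * ∫ ω, compoundReturn X n ω j / ∑ i, K i * compoundReturn X n ω i := by
  intro n _
  exact log_one_div_sub_one_add_mul_nonneg hKj.1
    (one_le_integral_compoundReturn_div_portfolio hmeas hiid hident hXmin (ae_all_iff.2 hbdd)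
      hdom hK hKj.1 n)

/-- Nonnegativity of the quantity appearing in the sharpened upper bound: if asset `j` is
dominant and `K_j ∈ (0,1]`, then `log(1/K_j) - 1 + K_j · E[R_{n,j}/(Kᵀ R_n)] ≥ 0`. -/
theorem sharp_upper_bound_nonneg
    {Ω : Type*} [MeasureSpace Ω] [IsProbabilityMeasure (ℙ : Measure Ω)]
    {m : ℕ} (hm : 2 ≤ m)
    (X : ℕ → Ω → Fin m → ℝ)
    (hmeas : ∀ k, Measurable (X k))
    (hiid : iIndepFun X ℙ)
    (hident : ∀ k, IdentDistrib (X k) (X 0) ℙ ℙ)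
    (Xmin Xmax : Fin m → ℝ)
    (hXmin : ∀ i, -1 < Xmin i)
    (hbdd : ∀ k, ∀ᵐ ω ∂(ℙ : Measure Ω), ∀ i, Xmin i ≤ X k ω i ∧ X k ω i ≤ Xmax i)
    (j : Fin m)
    (hdom : ∀ i, i ≠ j → ∫ ω, (1 + X 0 ω i) / (1 + X 0 ω j) ≤ 1)
    (K : Fin m → ℝ) (hK : K ∈ simplex m) (hKj : K j ∈ Set.Ioc (0 : ℝ) 1) :
    ∀ n : ℕ, 1 ≤ n →
      0 ≤ Real.log (1 / K j) - 1 +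
        K j * ∫ ω, compoundReturn X n ω j / ∑ i, K i * compoundReturn X n ω i :=
  sharp_upper_bound_nonneg_general X hmeas hiid hident Xmin Xmax hXmin hbdd j hdom K hK hKj
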